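/- Let N ≥ 1 and let x be a configuration on ℤ/N with exactly a particles, exactly b anti-particles, and at least one empty site (a + b < N). Let A_1, …, A_l be the binary sequences obtained by reading each maximal cyclic arc of non-empty sites of x from left to right, recording a particle as 1 and an anti-particle as 0. Then the number of pairs (S, T) of subsets of ℤ/N with |S| = a, |T| = b and collapse(S,T) = x equals the product W(A_1)·W(A_2)⋯W(A_l). -/

import Mathlib

/-- One move: replace an adjacent pair `10` by `01` (a `1` moves one step right).
`true` encodes the digit 1 and `false` encodes the digit 0. -/
def DomStep (A B : List Bool) : Prop :=
  ∃ X Y : List Bool, A = X ++ true :: false :: Y ∧ B = X ++ false :: true :: Y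

/-- `Dom A B` (`A ⪰ B`): `B` is obtained from `A` by finitely many such moves. -/
def Dom : List Bool → List Bool → Prop := Relation.ReflTransGen DomStep

/-- The weight W(A): the number of binary sequences dominated by A. -/
noncomputable def W (A : List Bool) : ℕ := Set.ncard {B | Dom A B}

/-- A site of the cycle is occupied by a particle, an anti-particle, or is empty. -/
inductive Site where
  | particle : Site
  | anti : Site
  | empty : Site
deriving DecidableEq

/-- The cyclic interval I = {a, a+1, …, a+k} in ℤ/N. -/
def cInterval (N : ℕ) [NeZero N] (a : ZMod N) (k : ℕ) : Finset (ZMod N) :=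
  (Finset.range (k + 1)).image fun j : ℕ => a + (j : ZMod N)

/-- Site `a` carries a particle in the collapse of (S, T): `a ∉ T` and there is a
cyclic interval I = {a, …, a+k}, 0 ≤ k < N, with |I ∩ S| + |I ∩ T| ≥ |I|. -/
def HasParticle (N : ℕ) [NeZero N] (S T : Finset (ZMod N)) (a : ZMod N) : Prop :=
  a ∉ T ∧ ∃ k, k < N ∧
    (cInterval N a k).card ≤ (cInterval N a k ∩ S).card + (cInterval N a k ∩ T).card

open Classical in
/-- The collapse of (S, T): anti-particles exactly at T, particles at the sites
described by `HasParticle`, every other site empty. -/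
noncomputable def collapse (N : ℕ) [NeZero N] (S T : Finset (ZMod N)) : ZMod N → Site :=
  fun a =>
    if a ∈ T then Site.anti
    else if HasParticle N S T a then Site.particle
    else Site.empty

/-- The length of the maximal run of non-empty sites immediately to the right of
the site `e` (intended for `e` an empty site of `x`): the least `j < N` with
`x (e + 1 + j)` empty. -/
def arcLen (N : ℕ) [NeZero N] (x : ZMod N → Site) (e : ZMod N) : ℕ :=
  (((List.range N).find? fun j : ℕ => decide (x (e + 1 + (j : ZMod N)) = Site.empty))).getD 0

/-- The binary sequence read from the maximal arc of non-empty sites immediately to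
the right of the empty site `e`, left to right, a particle as 1 and an
anti-particle as 0. -/
def arcWord (N : ℕ) [NeZero N] (x : ZMod N → Site) (e : ZMod N) : List Bool :=
  (List.range (arcLen N x e)).map fun j : ℕ => decide (x (e + 1 + (j : ZMod N)) = Site.particle)

set_option linter.unusedSectionVars false

namespace CollapseAux


/-- prefix count of `true`s -/
def pc (A : List Bool) (n : ℕ) : ℕ := (A.take n).count true

@[simp] lemma pc_zero (L : List Bool) : pc L 0 = 0 := rfl

@[simp] lemma pc_nil (n : ℕ) : pc [] n = 0 := by simp [pc]

lemma pc_cons_succ (c : Bool) (L : List Bool) (n : ℕ) :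
    pc (c :: L) (n + 1) = pc L n + (if c then 1 else 0) := by
  cases c <;> simp [pc, List.count_cons]

lemma pc_rep_append (k : ℕ) (L : List Bool) (n : ℕ) :
    pc (List.replicate k false ++ L) n = pc L (n - k) := by
  unfold pc
  rw [List.take_append, List.count_append, List.length_replicate]
  have h0 : (List.take n (List.replicate k false)).count true = 0 := by
    rw [List.count_eq_zero]
    intro hmem
    have := List.eq_of_mem_replicate (List.mem_of_mem_take hmem)
    simp at this
  omega

lemma dom_cons {c : Bool} {A B : List Bool} (h : Dom A B) : Dom (c :: A) (c :: B) := by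
  refine Relation.ReflTransGen.lift (fun L => c :: L) ?_ _ _ h
  rintro a b ⟨X, Y, rfl, rfl⟩
  exact ⟨c :: X, Y, rfl, rfl⟩

lemma domStep_length {A B : List Bool} (h : DomStep A B) : A.length = B.length := by
  obtain ⟨X, Y, rfl, rfl⟩ := h; simp

lemma dom_length {A B : List Bool} (h : Dom A B) : A.length = B.length := by
  induction h with
  | refl => rfl
  | tail _ h ih => rw [ih, domStep_length h]

lemma domStep_count {A B : List Bool} (h : DomStep A B) : A.count true = B.count true := by
  obtain ⟨X, Y, rfl, rfl⟩ := h; simp [List.count_append, List.count_cons]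

lemma dom_count {A B : List Bool} (h : Dom A B) : A.count true = B.count true := by
  induction h with
  | refl => rfl
  | tail _ h ih => rw [ih, domStep_count h]

lemma pc_swap_le (Y : List Bool) (m : ℕ) : pc (false :: true :: Y) m ≤ pc (true :: false :: Y) m := by
  match m with
  | 0 => simp
  | 1 => simp [pc, List.count_cons]
  | (m+2) => simp [pc_cons_succ]

lemma domStep_pc_le {A B : List Bool} (h : DomStep A B) (n : ℕ) : pc B n ≤ pc A n := by
  obtain ⟨X, Y, rfl, rfl⟩ := h
  unfold pc
  rw [List.take_append, List.take_append,
    List.count_append, List.count_append]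
  have := pc_swap_le Y (n - X.length)
  unfold pc at this
  omega

lemma dom_pc {A B : List Bool} (h : Dom A B) (n : ℕ) : pc B n ≤ pc A n := by
  induction h with
  | refl => exact le_refl _
  | tail _ h ih => exact le_trans (domStep_pc_le h n) ih

lemma exists_firstTrue {L : List Bool} (h : true ∈ L) :
    ∃ k M, L = List.replicate k false ++ true :: M := by
  induction L with
  | nil => simp at h
  | cons c L ih =>
    cases c with
    | false =>
      obtain ⟨k, M, rfl⟩ := ih (by simpa using h)
      exact ⟨k + 1, M, rfl⟩
    | true => exact ⟨0, L, rfl⟩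

lemma dom_shift (k : ℕ) (M : List Bool) :
    Dom (true :: (List.replicate k false ++ false :: M))
        (false :: (List.replicate k false ++ true :: M)) := by
  induction k with
  | zero => exact Relation.ReflTransGen.single ⟨[], M, rfl, rfl⟩
  | succ k ih =>
    refine Relation.ReflTransGen.head
      (⟨[], List.replicate k false ++ false :: M, by simp [List.replicate_succ], rfl⟩ :
        DomStep _ _) ?_
    simpa [Dom, List.replicate_succ] using dom_cons (c := false) ih

theorem dom_of_conditions : ∀ {A B : List Bool}, A.length = B.length →
    A.count true = B.count true → (∀ n, pc B n ≤ pc A n) → Dom A B := by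
  intro A
  induction A with
  | nil =>
    intro B hl _ _
    cases B with
    | nil => exact Relation.ReflTransGen.refl
    | cons b B => simp at hl
  | cons a A ih =>
    intro B hl hc hp
    cases B with
    | nil => simp at hl
    | cons b B =>
      have hl' : A.length = B.length := by simpa using hl
      match a, b with
      | false, false =>
        exact dom_cons (ih hl' (by simpa [List.count_cons] using hc)
          (fun n => by have := hp (n + 1); simpa [pc_cons_succ] using this))
      | true, true =>
        exact dom_cons (ih hl' (by simpa [List.count_cons] using hc)
          (fun n => by have := hp (n + 1); simpa [pc_cons_succ] using this))
      | false, true =>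
        have := hp 1
        simp [pc, List.count_cons] at this
      | true, false =>
        have hmem : true ∈ B := by
          by_contra hmem
          have hz : B.count true = 0 := List.count_eq_zero.2 hmem
          simp [List.count_cons, hz] at hc
        obtain ⟨k, M, rfl⟩ := exists_firstTrue hmem
        have h1 : Dom (true :: A) (true :: (List.replicate k false ++ false :: M)) := by
          apply dom_cons
          apply ih
          · simp at hl' ⊢; omega
          · simp [List.count_append, List.count_cons, List.count_replicate] at hc ⊢
            omega
          · intro n
            have h2 := hp (n + 1)
            rw [pc_cons_succ, pc_cons_succ, pc_rep_append] at h2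
            rw [pc_rep_append]
            rcases Nat.eq_zero_or_eq_succ_pred (n - k) with h3 | h3
            · rw [h3]; simp
            · rw [h3] at h2 ⊢
              rw [pc_cons_succ] at h2 ⊢
              simp at h2 ⊢
              omega
        exact h1.trans (dom_shift k M)

theorem dom_iff {A B : List Bool} : Dom A B ↔
    A.length = B.length ∧ A.count true = B.count true ∧ ∀ n, pc B n ≤ pc A n :=
  ⟨fun h => ⟨dom_length h, dom_count h, dom_pc h⟩,
   fun ⟨h1, h2, h3⟩ => dom_of_conditions h1 h2 h3⟩



variable (N : ℕ) [NeZero N]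

lemma natCast_zmod_inj {i j : ℕ} (hi : i < N) (hj : j < N)
    (h : (i : ZMod N) = (j : ZMod N)) : i = j := by
  rw [← ZMod.val_cast_of_lt hi, ← ZMod.val_cast_of_lt hj, h]

/-- Half-open cyclic segment of length `m` starting at `c`. -/
def seg (c : ZMod N) (m : ℕ) : Finset (ZMod N) :=
  (Finset.range m).image fun j : ℕ => c + (j : ZMod N)

lemma mem_seg {c s : ZMod N} {m : ℕ} : s ∈ seg N c m ↔ ∃ j < m, c + (j : ZMod N) = s := by
  simp [seg]

@[simp] lemma seg_zero (c : ZMod N) : seg N c 0 = ∅ := by simp [seg]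

lemma seg_one (c : ZMod N) : seg N c 1 = {c} := by
  simp [seg, Finset.range_one]

lemma seg_succ (c : ZMod N) (m : ℕ) :
    seg N c (m + 1) = insert (c + (m : ZMod N)) (seg N c m) := by
  simp [seg, Finset.range_add_one]

lemma not_mem_seg (c : ZMod N) {m : ℕ} (h : m < N) : c + (m : ZMod N) ∉ seg N c m := by
  rw [mem_seg]
  rintro ⟨j, hj, hEq⟩
  have := natCast_zmod_inj N (lt_trans hj h) h (add_left_cancel hEq)
  omega

lemma card_seg (c : ZMod N) {m : ℕ} (h : m ≤ N) : (seg N c m).card = m := by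
  rw [seg, Finset.card_image_of_injOn, Finset.card_range]
  intro i hi j hj hEq
  simp only [Finset.coe_range, Set.mem_Iio] at hi hj
  exact natCast_zmod_inj N (lt_of_lt_of_le hi h) (lt_of_lt_of_le hj h)
    (add_left_cancel hEq)

lemma seg_union (c : ZMod N) (m1 m2 : ℕ) :
    seg N c (m1 + m2) = seg N c m1 ∪ seg N (c + (m1 : ZMod N)) m2 := by
  ext s
  simp only [mem_seg, Finset.mem_union]
  constructor
  · rintro ⟨j, hj, rfl⟩
    by_cases hj1 : j < m1
    · exact Or.inl ⟨j, hj1, rfl⟩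
    · refine Or.inr ⟨j - m1, by omega, ?_⟩
      have : (j : ZMod N) = (m1 : ZMod N) + ((j - m1 : ℕ) : ZMod N) := by
        rw [← Nat.cast_add]; congr 1; omega
      rw [this]; ring
  · rintro (⟨j, hj, rfl⟩ | ⟨j, hj, rfl⟩)
    · exact ⟨j, by omega, rfl⟩
    · refine ⟨m1 + j, by omega, ?_⟩
      rw [Nat.cast_add]; ring

lemma seg_disjoint (c : ZMod N) {m1 m2 : ℕ} (h : m1 + m2 ≤ N) :
    Disjoint (seg N c m1) (seg N (c + (m1 : ZMod N)) m2) := by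
  rw [Finset.disjoint_left]
  intro s hs1 hs2
  rw [mem_seg] at hs1 hs2
  obtain ⟨i, hi, hEq1⟩ := hs1
  obtain ⟨j, hj, hEq2⟩ := hs2
  rw [← hEq1] at hEq2
  have : (c : ZMod N) + ((m1 + j : ℕ) : ZMod N) = c + (i : ZMod N) := by
    rw [Nat.cast_add]; rw [← hEq2]; ring
  have := natCast_zmod_inj N (by omega) (by omega) (add_left_cancel this)
  omega

lemma card_inter_add (c : ZMod N) {m1 m2 : ℕ} (h : m1 + m2 ≤ N) (F : Finset (ZMod N)) :
    ((seg N c (m1 + m2)) ∩ F).card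
      = ((seg N c m1) ∩ F).card + ((seg N (c + (m1 : ZMod N)) m2) ∩ F).card := by
  rw [seg_union, Finset.union_inter_distrib_right, Finset.card_union_of_disjoint]
  exact (seg_disjoint N c h).mono Finset.inter_subset_left Finset.inter_subset_left

lemma find?_range_eq_some {p : ℕ → Bool} {n j : ℕ} :
    (List.range n).find? p = some j ↔ j < n ∧ p j = true ∧ ∀ i < j, ¬ p i = true := by
  rw [List.find?_eq_some_iff_append]
  constructor
  · rintro ⟨hpj, as, bs, heq, hall⟩
    have hlen2 : as.length + 1 + bs.length = n := by
      have := congrArg List.length heq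
      simp at this
      omega
    have hL : as.length < n := by omega
    have htake : as = List.range as.length := by
      have h2 := congrArg (List.take as.length) heq
      rw [List.take_left, List.take_range] at h2
      rw [min_eq_left hL.le] at h2
      exact h2.symm
    have hdrop : List.drop as.length (List.range n) = j :: bs := by
      have h2 := congrArg (List.drop as.length) heq
      rw [List.drop_left] at h2
      exact h2
    have hasl : as.length = j := by
      rw [List.drop_eq_getElem_cons (by simpa using hL)] at hdrop
      have h3 := (List.cons.injEq _ _ _ _).mp hdrop |>.1
      rw [List.getElem_range] at h3
      exact h3
    have hjn : j < n := by omega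
    refine ⟨hjn, hpj, fun i hi hpi => ?_⟩
    have : i ∈ as := by rw [htake, hasl]; simpa using hi
    have := hall i this
    simp [hpi] at this
  · rintro ⟨hjn, hpj, hmin⟩
    refine ⟨hpj, List.range j, (List.range n).drop (j + 1), ?_, ?_⟩
    · conv_lhs => rw [← List.take_append_drop j (List.range n)]
      rw [List.take_range, List.drop_eq_getElem_cons (by simpa using hjn), List.getElem_range]
      congr 2
      omega
    · intro i hi
      simp only [List.mem_range] at hi
      simp [hmin i hi]

variable (x : ZMod N → Site)

lemma arcLen_spec {e : ZMod N} (he : x e = Site.empty) :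
    arcLen N x e < N ∧ x (e + 1 + ((arcLen N x e : ℕ) : ZMod N)) = Site.empty ∧
      ∀ j < arcLen N x e, x (e + 1 + (j : ZMod N)) ≠ Site.empty := by
  have hN : 0 < N := Nat.pos_of_ne_zero (NeZero.ne N)
  have key : e + 1 + ((N - 1 : ℕ) : ZMod N) = e := by
    rw [add_assoc]
    have h2 : (1 : ZMod N) + ((N - 1 : ℕ) : ZMod N) = ((N : ℕ) : ZMod N) := by
      rw [← Nat.cast_one, ← Nat.cast_add]
      congr 1
      omega
    rw [h2, ZMod.natCast_self, add_zero]
  have hsome : ∃ j, (List.range N).find?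
      (fun j : ℕ => decide (x (e + 1 + (j : ZMod N)) = Site.empty)) = some j := by
    rw [← Option.isSome_iff_exists, List.find?_isSome]
    exact ⟨N - 1, List.mem_range.mpr (by omega), by simp [key, he]⟩
  obtain ⟨j, hj⟩ := hsome
  have harc : arcLen N x e = j := by rw [arcLen, hj]; rfl
  rw [find?_range_eq_some] at hj
  obtain ⟨h1, h2, h3⟩ := hj
  rw [harc]
  refine ⟨h1, by simpa using h2, fun i hi => ?_⟩
  have := h3 i hi
  simpa using this

open Classical in
/-- distance from `s` back to the first empty site strictly left of `s` -/
noncomputable def off (hx : ∃ t, x t = Site.empty) (s : ZMod N) : ℕ :=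
  Nat.find (p := fun j : ℕ => x (s - 1 - (j : ZMod N)) = Site.empty) (by
    obtain ⟨t, ht⟩ := id hx
    refine ⟨(s - 1 - t).val, ?_⟩
    show x (s - 1 - (((s - 1 - t).val : ℕ) : ZMod N)) = Site.empty
    rw [ZMod.natCast_val, ZMod.cast_id]
    simpa [sub_sub_cancel] using ht)

noncomputable def eOf (hx : ∃ t, x t = Site.empty) (s : ZMod N) : ZMod N :=
  s - 1 - ((off N x hx s : ℕ) : ZMod N)

lemma off_isLeast (hx : ∃ t, x t = Site.empty) (s : ZMod N) :
    x (s - 1 - ((off N x hx s : ℕ) : ZMod N)) = Site.empty ∧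
      ∀ i < off N x hx s, x (s - 1 - (i : ZMod N)) ≠ Site.empty := by
  unfold off
  exact ⟨Nat.find_spec (p := fun j : ℕ => x (s - 1 - (j : ZMod N)) = Site.empty) _,
    fun i hi => Nat.find_min _ hi⟩

lemma off_spec (hx : ∃ t, x t = Site.empty) (s : ZMod N) : x (eOf N x hx s) = Site.empty := by
  rw [eOf]
  exact (off_isLeast N x hx s).1

lemma off_min (hx : ∃ t, x t = Site.empty) (s : ZMod N) {i : ℕ} (hi : i < off N x hx s) :
    x (s - 1 - (i : ZMod N)) ≠ Site.empty :=
  (off_isLeast N x hx s).2 i hi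

lemma off_lt (hx : ∃ t, x t = Site.empty) (s : ZMod N) : off N x hx s < N := by
  by_contra hcon
  push_neg at hcon
  obtain ⟨t, ht⟩ := id hx
  have hp : x (s - 1 - (((s - 1 - t).val : ℕ) : ZMod N)) = Site.empty := by
    rw [ZMod.natCast_val, ZMod.cast_id]
    simpa [sub_sub_cancel] using ht
  exact off_min N x hx s (lt_of_lt_of_le (ZMod.val_lt _) hcon) hp

lemma off_eq (hx : ∃ t, x t = Site.empty) (e : ZMod N) (he : x e = Site.empty) (j : ℕ)
    (hne : ∀ i < j, x (e + 1 + (i : ZMod N)) ≠ Site.empty) :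
    off N x hx (e + 1 + (j : ZMod N)) = j := by
  have key : ∀ i : ℕ, i < j →
      e + 1 + (j : ZMod N) - 1 - (i : ZMod N) = e + 1 + ((j - 1 - i : ℕ) : ZMod N) := by
    intro i hi
    have hcast : (j : ZMod N) = (i : ZMod N) + 1 + ((j - 1 - i : ℕ) : ZMod N) := by
      rw [← Nat.cast_one, ← Nat.cast_add, ← Nat.cast_add]
      congr 1
      omega
    rw [hcast]
    ring
  have hsj : e + 1 + (j : ZMod N) - 1 - (j : ZMod N) = e := by ring
  rcases lt_trichotomy (off N x hx (e + 1 + (j : ZMod N))) j with h | h | h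
  · have h1 := off_spec N x hx (e + 1 + (j : ZMod N))
    rw [eOf, key _ h] at h1
    exact absurd h1 (hne _ (by omega))
  · exact h
  · have h2 := off_min N x hx (e + 1 + (j : ZMod N)) h
    rw [hsj] at h2
    exact absurd he h2

lemma eOf_eq (hx : ∃ t, x t = Site.empty) (e : ZMod N) (he : x e = Site.empty) (j : ℕ)
    (hne : ∀ i < j, x (e + 1 + (i : ZMod N)) ≠ Site.empty) :
    eOf N x hx (e + 1 + (j : ZMod N)) = e := by
  rw [eOf, off_eq N x hx e he j hne]
  ring

lemma coord (hx : ∃ t, x t = Site.empty) {e : ZMod N} (he : x e = Site.empty) {j : ℕ}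
    (hj : j < arcLen N x e) :
    off N x hx (e + 1 + (j : ZMod N)) = j ∧ eOf N x hx (e + 1 + (j : ZMod N)) = e := by
  obtain ⟨hlt, _, hne⟩ := arcLen_spec N x he
  have hne' : ∀ i < j, x (e + 1 + (i : ZMod N)) ≠ Site.empty :=
    fun i hi => hne i (lt_trans hi hj)
  exact ⟨off_eq N x hx e he j hne', eOf_eq N x hx e he j hne'⟩

lemma decomp (hx : ∃ t, x t = Site.empty) {s : ZMod N} (hs : x s ≠ Site.empty) :
    off N x hx s < arcLen N x (eOf N x hx s) ∧
      s = eOf N x hx s + 1 + ((off N x hx s : ℕ) : ZMod N) := by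
  set e := eOf N x hx s with hedef
  set d := off N x hx s with hddef
  have he : x e = Site.empty := off_spec N x hx s
  have hs_eq : s = e + 1 + (d : ZMod N) := by
    rw [hedef, eOf, hddef]
    ring
  obtain ⟨hlt, hend, hne⟩ := arcLen_spec N x he
  refine ⟨?_, hs_eq⟩
  by_contra hcon
  push_neg at hcon
  have hkey : ∀ k : ℕ, k ≤ d → x (e + 1 + (k : ZMod N)) ≠ Site.empty := by
    intro k hk
    by_cases hkd : k = d
    · rw [hkd, ← hs_eq]
      exact hs
    · have hklt : k < d := by omega
      have hcast : ((d : ℕ) : ZMod N) = (k : ZMod N) + 1 + ((d - 1 - k : ℕ) : ZMod N) := by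
        rw [← Nat.cast_one, ← Nat.cast_add, ← Nat.cast_add]
        congr 1
        omega
      have harr : s - 1 - ((d - 1 - k : ℕ) : ZMod N) = e + 1 + (k : ZMod N) := by
        conv_lhs => rw [hs_eq]
        rw [hcast]
        ring
      rw [← harr]
      exact off_min N x hx s (by omega)
  exact hkey _ hcon hend

def Pf (x : ZMod N → Site) : Finset (ZMod N) := Finset.univ.filter fun s => x s = Site.particle
def Tf (x : ZMod N → Site) : Finset (ZMod N) := Finset.univ.filter fun s => x s = Site.anti
def Ef (x : ZMod N → Site) : Finset (ZMod N) := Finset.univ.filter fun s => x s = Site.empty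

lemma mem_Pf {x : ZMod N → Site} {s : ZMod N} : s ∈ Pf N x ↔ x s = Site.particle := by
  simp [Pf]
lemma mem_Tf {x : ZMod N → Site} {s : ZMod N} : s ∈ Tf N x ↔ x s = Site.anti := by
  simp [Tf]
lemma mem_Ef {x : ZMod N → Site} {s : ZMod N} : s ∈ Ef N x ↔ x s = Site.empty := by
  simp [Ef]

lemma eOf_mem (hx : ∃ t, x t = Site.empty) (s : ZMod N) : eOf N x hx s ∈ Ef N x :=
  (mem_Ef N).mpr (off_spec N x hx s)

lemma card_eq_sum_arcs (hx : ∃ t, x t = Site.empty) (F : Finset (ZMod N))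
    (hF : ∀ s ∈ F, x s ≠ Site.empty) :
    F.card = ∑ e ∈ Ef N x, ((seg N (e + 1) (arcLen N x e)) ∩ F).card := by
  classical
  rw [Finset.card_eq_sum_card_fiberwise (f := eOf N x hx) (t := Ef N x)
    (fun s _ => eOf_mem N x hx s)]
  refine Finset.sum_congr rfl fun e hemem => ?_
  congr 1
  have he : x e = Site.empty := (mem_Ef N).mp hemem
  ext s
  simp only [Finset.mem_filter, Finset.mem_inter]
  constructor
  · rintro ⟨hsF, hEq⟩
    refine ⟨?_, hsF⟩
    obtain ⟨hlt, hs_eq⟩ := decomp N x hx (hF s hsF)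
    rw [mem_seg]
    refine ⟨off N x hx s, by rw [← hEq]; exact hlt, ?_⟩
    rw [← hEq]
    exact hs_eq.symm
  · rintro ⟨hseg, hsF⟩
    refine ⟨hsF, ?_⟩
    rw [mem_seg] at hseg
    obtain ⟨j, hj, rfl⟩ := hseg
    exact (coord N x hx he hj).2

/-- the 0/1 word recording membership in `F` along the segment from `c` of length `m` -/
def sword (F : Finset (ZMod N)) (c : ZMod N) (m : ℕ) : List Bool :=
  (List.range m).map fun j : ℕ => decide ((c + (j : ZMod N)) ∈ F)

@[simp] lemma length_sword (F : Finset (ZMod N)) (c : ZMod N) (m : ℕ) :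
    (sword N F c m).length = m := by simp [sword]

lemma count_sword (F : Finset (ZMod N)) (c : ZMod N) {m : ℕ} (hm : m ≤ N) :
    (sword N F c m).count true = ((seg N c m) ∩ F).card := by
  induction m with
  | zero => simp [sword]
  | succ m ih =>
    rw [sword, List.range_succ, List.map_append, List.count_append]
    have ihm := ih (by omega)
    rw [sword] at ihm
    rw [ihm, seg_succ]
    by_cases hcm : c + (m : ZMod N) ∈ F
    · rw [Finset.insert_inter_of_mem hcm,
        Finset.card_insert_of_notMem (fun hmem => not_mem_seg N c (by omega)
          (Finset.mem_of_mem_inter_left hmem))]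
      simp [hcm]
    · rw [Finset.insert_inter_of_notMem hcm]
      simp [hcm]

lemma pc_sword (F : Finset (ZMod N)) (c : ZMod N) {m : ℕ} (hm : m ≤ N) (n : ℕ) :
    pc (sword N F c m) n = ((seg N c (min n m)) ∩ F).card := by
  rw [pc, sword, ← List.map_take, List.take_range]
  have := count_sword N F c (m := min n m) (le_trans (min_le_right _ _) hm)
  rw [sword] at this
  rw [this]

lemma arcWord_eq (x : ZMod N → Site) (e : ZMod N) :
    arcWord N x e = sword N (Pf N x) (e + 1) (arcLen N x e) := by
  unfold arcWord sword
  apply List.map_congr_left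
  intro j _
  simp [mem_Pf]

lemma card_inter_P_T (x : ZMod N → Site) (I : Finset (ZMod N))
    (hI : ∀ s ∈ I, x s ≠ Site.empty) :
    (I ∩ Pf N x).card + (I ∩ Tf N x).card = I.card := by
  classical
  rw [← Finset.card_union_of_disjoint (by
    rw [Finset.disjoint_left]
    intro s h1 h2
    have hp := (mem_Pf N).mp (Finset.mem_of_mem_inter_right h1)
    have ht := (mem_Tf N).mp (Finset.mem_of_mem_inter_right h2)
    rw [hp] at ht
    exact Site.noConfusion ht)]
  congr 1
  ext s
  simp only [Finset.mem_union, Finset.mem_inter, mem_Pf, mem_Tf]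
  constructor
  · rintro (⟨h, _⟩ | ⟨h, _⟩) <;> exact h
  · intro hs
    cases hc : x s with
    | particle => exact Or.inl ⟨hs, rfl⟩
    | anti => exact Or.inr ⟨hs, rfl⟩
    | empty => exact absurd hc (hI s hs)

lemma seg_nonempty_sites {x : ZMod N → Site} {e : ZMod N} (he : x e = Site.empty) {m : ℕ}
    (hm : m ≤ arcLen N x e) : ∀ s ∈ seg N (e + 1) m, x s ≠ Site.empty := by
  intro s hs
  rw [mem_seg] at hs
  obtain ⟨j, hj, rfl⟩ := hs
  exact (arcLen_spec N x he).2.2 j (by omega)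

lemma seg_shift_subset (c : ZMod N) (d m : ℕ) :
    seg N (c + (d : ZMod N)) m ⊆ seg N c (d + m) := by
  intro s hs
  rw [mem_seg] at hs ⊢
  obtain ⟨i, hi, rfl⟩ := hs
  exact ⟨d + i, by omega, by rw [Nat.cast_add]; ring⟩

lemma card_inter_one_add (c : ZMod N) {m : ℕ} (h : m + 1 ≤ N) (F : Finset (ZMod N))
    (hc : c ∉ F) : ((seg N c (m + 1)) ∩ F).card = ((seg N (c + 1) m) ∩ F).card := by
  have h1 : (1 : ℕ) + m = m + 1 := by omega
  have h2 := card_inter_add N c (m1 := 1) (m2 := m) (by omega) F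
  rw [h1] at h2
  rw [h2, seg_one, Finset.singleton_inter_of_notMem hc]
  simp

lemma card_inter_split (c : ZMod N) {d L : ℕ} (hdL : d ≤ L) (hLN : L ≤ N) (F : Finset (ZMod N)) :
    ((seg N c L) ∩ F).card
      = ((seg N c d) ∩ F).card + ((seg N (c + (d : ZMod N)) (L - d)) ∩ F).card := by
  have h1 : d + (L - d) = L := by omega
  have h2 := card_inter_add N c (m1 := d) (m2 := L - d) (by omega) F
  rw [h1] at h2
  exact h2

lemma collapse_of_mem {S T : Finset (ZMod N)} {c : ZMod N} (h : c ∈ T) :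
    collapse N S T c = Site.anti := by
  simp [collapse, h]

lemma collapse_of_has {S T : Finset (ZMod N)} {c : ZMod N} (h1 : c ∉ T)
    (h2 : HasParticle N S T c) : collapse N S T c = Site.particle := by
  simp [collapse, h1, h2]

lemma collapse_of_not {S T : Finset (ZMod N)} {c : ZMod N} (h1 : c ∉ T)
    (h2 : ¬ HasParticle N S T c) : collapse N S T c = Site.empty := by
  simp [collapse, h1, h2]

lemma hasParticle_of_mem {S T : Finset (ZMod N)} {c : ZMod N} (hcS : c ∈ S) (hcT : c ∉ T) :
    HasParticle N S T c := by
  refine ⟨hcT, 0, Nat.pos_of_ne_zero (NeZero.ne N), ?_⟩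
  show (seg N c 1).card ≤ ((seg N c 1) ∩ S).card + ((seg N c 1) ∩ T).card
  rw [seg_one, Finset.singleton_inter_of_mem hcS]
  simp

variable (x : ZMod N → Site)

lemma main_mp (hx : ∃ t, x t = Site.empty) {a : ℕ} (ha : (Pf N x).card = a)
    (S T : Finset (ZMod N)) (hS : S.card = a) (hcol : collapse N S T = x) :
    T = Tf N x ∧ (∀ s ∈ S, x s ≠ Site.empty) ∧
      ∀ e ∈ Ef N x, Dom (arcWord N x e) (sword N S (e + 1) (arcLen N x e)) := by
  have hcolc : ∀ c, collapse N S T c = x c := fun c => congrFun hcol c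
  have hTeq : T = Tf N x := by
    ext t
    rw [mem_Tf]
    constructor
    · intro htT
      rw [← hcolc t, collapse_of_mem N htT]
    · intro hanti
      by_contra htT
      by_cases hp : HasParticle N S T t
      · have h := hcolc t
        rw [collapse_of_has N htT hp, hanti] at h
        exact Site.noConfusion h
      · have h := hcolc t
        rw [collapse_of_not N htT hp, hanti] at h
        exact Site.noConfusion h
  have hSsub : ∀ s ∈ S, x s ≠ Site.empty := by
    intro s hsS hemp
    by_cases hsT : s ∈ T
    · have h := hcolc s
      rw [collapse_of_mem N hsT, hemp] at h
      exact Site.noConfusion h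
    · have h := hcolc s
      rw [collapse_of_has N hsT (hasParticle_of_mem N hsS hsT), hemp] at h
      exact Site.noConfusion h
  have hEmp : ∀ e ∈ Ef N x, e ∉ S ∧ e ∉ T ∧ ¬ HasParticle N S T e := by
    intro e he
    have hee := (mem_Ef N).mp he
    have heT : e ∉ T := by
      intro h
      have h2 := hcolc e
      rw [collapse_of_mem N h, hee] at h2
      exact Site.noConfusion h2
    have hnp : ¬ HasParticle N S T e := by
      intro hp
      have h2 := hcolc e
      rw [collapse_of_has N heT hp, hee] at h2
      exact Site.noConfusion h2
    exact ⟨fun h => hnp (hasParticle_of_mem N h heT), heT, hnp⟩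
  have hprefix : ∀ e ∈ Ef N x, ∀ m ≤ arcLen N x e,
      ((seg N (e + 1) m) ∩ S).card ≤ ((seg N (e + 1) m) ∩ Pf N x).card := by
    intro e he m hm
    have hee := (mem_Ef N).mp he
    obtain ⟨hlt, -, -⟩ := arcLen_spec N x hee
    have hmN : m + 1 ≤ N := by omega
    obtain ⟨heS, heT, hnp⟩ := hEmp e he
    have hnosat : ((seg N e (m + 1)) ∩ S).card + ((seg N e (m + 1)) ∩ T).card
        < (seg N e (m + 1)).card := by
      by_contra hcontra
      push_neg at hcontra
      exact hnp ⟨heT, m, by omega, hcontra⟩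
    rw [card_seg N e hmN, card_inter_one_add N e hmN S heS,
      card_inter_one_add N e hmN T heT] at hnosat
    have hPT := card_inter_P_T N x (seg N (e + 1) m) (seg_nonempty_sites N hee hm)
    rw [card_seg N (e + 1) (by omega)] at hPT
    rw [hTeq] at hnosat
    omega
  refine ⟨hTeq, hSsub, ?_⟩
  have hPsub : ∀ s ∈ Pf N x, x s ≠ Site.empty := by
    intro s hs
    rw [mem_Pf] at hs
    rw [hs]
    exact fun h => Site.noConfusion h
  have hsum : ∑ e ∈ Ef N x, ((seg N (e + 1) (arcLen N x e)) ∩ S).card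
      = ∑ e ∈ Ef N x, ((seg N (e + 1) (arcLen N x e)) ∩ Pf N x).card := by
    rw [← card_eq_sum_arcs N x hx S hSsub, ← card_eq_sum_arcs N x hx (Pf N x) hPsub, hS, ha]
  have hcounts := (Finset.sum_eq_sum_iff_of_le
    (fun e he => hprefix e he (arcLen N x e) le_rfl)).1 hsum
  intro e he
  have hee := (mem_Ef N).mp he
  obtain ⟨hlt, -, -⟩ := arcLen_spec N x hee
  rw [arcWord_eq, dom_iff]
  refine ⟨by simp, ?_, ?_⟩
  · rw [count_sword N _ _ (by omega : arcLen N x e ≤ N),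
      count_sword N _ _ (by omega : arcLen N x e ≤ N)]
    exact (hcounts e he).symm
  · intro n
    rw [pc_sword N _ _ (by omega : arcLen N x e ≤ N),
      pc_sword N _ _ (by omega : arcLen N x e ≤ N)]
    exact hprefix e he _ (min_le_right _ _)

lemma main_mpr (hx : ∃ t, x t = Site.empty) {a b : ℕ}
    (ha : (Pf N x).card = a) (hb : (Tf N x).card = b)
    (S : Finset (ZMod N)) (hSsub : ∀ s ∈ S, x s ≠ Site.empty)
    (hdom : ∀ e ∈ Ef N x, Dom (arcWord N x e) (sword N S (e + 1) (arcLen N x e))) :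
    S.card = a ∧ (Tf N x).card = b ∧ collapse N S (Tf N x) = x := by
  have hcnt : ∀ e ∈ Ef N x, ((seg N (e + 1) (arcLen N x e)) ∩ S).card
      = ((seg N (e + 1) (arcLen N x e)) ∩ Pf N x).card := by
    intro e he
    have hee := (mem_Ef N).mp he
    obtain ⟨hlt, -, -⟩ := arcLen_spec N x hee
    have h := dom_count (hdom e he)
    rw [arcWord_eq, count_sword N _ _ (by omega : arcLen N x e ≤ N),
      count_sword N _ _ (by omega : arcLen N x e ≤ N)] at h
    exact h.symm
  have hpre : ∀ e ∈ Ef N x, ∀ m ≤ arcLen N x e,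
      ((seg N (e + 1) m) ∩ S).card ≤ ((seg N (e + 1) m) ∩ Pf N x).card := by
    intro e he m hm
    have hee := (mem_Ef N).mp he
    obtain ⟨hlt, -, -⟩ := arcLen_spec N x hee
    have h := dom_pc (hdom e he) m
    rw [arcWord_eq, pc_sword N _ _ (by omega : arcLen N x e ≤ N),
      pc_sword N _ _ (by omega : arcLen N x e ≤ N), min_eq_left hm] at h
    exact h
  have hPsub : ∀ s ∈ Pf N x, x s ≠ Site.empty := by
    intro s hs
    rw [mem_Pf] at hs
    rw [hs]
    exact fun h => Site.noConfusion h
  have hcard : S.card = a := by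
    rw [card_eq_sum_arcs N x hx S hSsub, ← ha,
      card_eq_sum_arcs N x hx (Pf N x) hPsub]
    exact Finset.sum_congr rfl hcnt
  refine ⟨hcard, hb, ?_⟩
  have no_sat : ∀ k, k < N → ∀ c, x c = Site.empty →
      ((seg N c (k + 1)) ∩ S).card + ((seg N c (k + 1)) ∩ Tf N x).card ≤ k := by
    intro k
    induction k using Nat.strong_induction_on with
    | _ k IH =>
      intro hkN c hc
      obtain ⟨hlt, hend, hne⟩ := arcLen_spec N x hc
      have hcE : c ∈ Ef N x := (mem_Ef N).mpr hc
      have hcS : c ∉ S := fun h => hSsub c h hc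
      have hcT : c ∉ Tf N x := by
        rw [mem_Tf, hc]
        exact fun h => Site.noConfusion h
      set L := arcLen N x c with hL
      by_cases hkL : k ≤ L
      · rw [card_inter_one_add N c (by omega) S hcS,
          card_inter_one_add N c (by omega) (Tf N x) hcT]
        have hPT := card_inter_P_T N x (seg N (c + 1) k) (seg_nonempty_sites N hc hkL)
        rw [card_seg N (c + 1) (by omega)] at hPT
        have h4 := hpre c hcE k hkL
        omega
      · have hsplit : ∀ F : Finset (ZMod N), ((seg N c (k + 1)) ∩ F).card
            = ((seg N c (L + 1)) ∩ F).card
              + ((seg N (c + ((L + 1 : ℕ) : ZMod N)) (k - L)) ∩ F).card := by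
          intro F
          have h5 := card_inter_split N c (d := L + 1) (L := k + 1) (by omega) (by omega) F
          rw [show k + 1 - (L + 1) = k - L from by omega] at h5
          exact h5
        have hbase : c + ((L + 1 : ℕ) : ZMod N) = c + 1 + (L : ZMod N) := by
          push_cast
          ring
        have hc2 : x (c + ((L + 1 : ℕ) : ZMod N)) = Site.empty := by
          rw [hbase]
          exact hend
        have hIH := IH (k - L - 1) (by omega) (by omega) _ hc2
        rw [show k - L - 1 + 1 = k - L from by omega] at hIH
        have hfirst_S : ((seg N c (L + 1)) ∩ S).card = ((seg N (c + 1) L) ∩ S).card :=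
          card_inter_one_add N c (by omega) S hcS
        have hfirst_T : ((seg N c (L + 1)) ∩ Tf N x).card
            = ((seg N (c + 1) L) ∩ Tf N x).card :=
          card_inter_one_add N c (by omega) (Tf N x) hcT
        have hPT := card_inter_P_T N x (seg N (c + 1) L) (seg_nonempty_sites N hc le_rfl)
        rw [card_seg N (c + 1) (by omega)] at hPT
        have hc1 := hcnt c hcE
        rw [← hL] at hc1
        rw [hsplit S, hsplit (Tf N x)]
        omega
  funext c
  cases hxc : x c with
  | anti => exact collapse_of_mem N ((mem_Tf N).mpr hxc)
  | particle =>
    have hcT : c ∉ Tf N x := by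
      rw [mem_Tf, hxc]
      exact fun h => Site.noConfusion h
    have hcne : x c ≠ Site.empty := by
      rw [hxc]
      exact fun h => Site.noConfusion h
    obtain ⟨hdlt, hceq⟩ := decomp N x hx hcne
    set e := eOf N x hx c with hedef
    set d := off N x hx c with hddef
    have he : x e = Site.empty := off_spec N x hx c
    have heE : e ∈ Ef N x := (mem_Ef N).mpr he
    obtain ⟨hlt, -, -⟩ := arcLen_spec N x he
    set L := arcLen N x e with hLdef
    have hsplit : ∀ F : Finset (ZMod N), ((seg N (e + 1) L) ∩ F).card
        = ((seg N (e + 1) d) ∩ F).card + ((seg N (e + 1 + (d : ZMod N)) (L - d)) ∩ F).card :=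
      fun F => card_inter_split N (e + 1) (d := d) (L := L) (by omega) (by omega) F
    have hsuffPT : ((seg N (e + 1 + (d : ZMod N)) (L - d)) ∩ Pf N x).card
        + ((seg N (e + 1 + (d : ZMod N)) (L - d)) ∩ Tf N x).card = L - d := by
      have hsub := seg_shift_subset N (e + 1) d (L - d)
      rw [show d + (L - d) = L from by omega] at hsub
      have h6 := card_inter_P_T N x (seg N (e + 1 + (d : ZMod N)) (L - d))
        (fun s hs => seg_nonempty_sites N he le_rfl s (hsub hs))
      rw [card_seg N _ (by omega)] at h6
      exact h6
    have hkey : (L - d) ≤ ((seg N c (L - d)) ∩ S).card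
        + ((seg N c (L - d)) ∩ Tf N x).card := by
      have h1 := hsplit S
      have h2 := hsplit (Pf N x)
      have h3 := hcnt e heE
      rw [← hLdef] at h3
      have h4 := hpre e heE d (by omega)
      rw [hceq]
      omega
    refine collapse_of_has N hcT ⟨hcT, L - d - 1, by omega, ?_⟩
    show (seg N c (L - d - 1 + 1)).card ≤ ((seg N c (L - d - 1 + 1)) ∩ S).card
      + ((seg N c (L - d - 1 + 1)) ∩ Tf N x).card
    rw [show L - d - 1 + 1 = L - d from by omega, card_seg N c (by omega)]
    exact hkey
  | empty =>
    have hcT : c ∉ Tf N x := by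
      rw [mem_Tf, hxc]
      exact fun h => Site.noConfusion h
    refine collapse_of_not N hcT ?_
    rintro ⟨-, k, hkN, hsat⟩
    have h7 := no_sat k hkN c hxc
    have hsat2 : (seg N c (k + 1)).card
        ≤ ((seg N c (k + 1)) ∩ S).card + ((seg N c (k + 1)) ∩ Tf N x).card := hsat
    rw [card_seg N c (by omega)] at hsat2
    omega

lemma sword_getD (F : Finset (ZMod N)) (c : ZMod N) {m j : ℕ} (hj : j < m) :
    (sword N F c m).getD j false = decide ((c + (j : ZMod N)) ∈ F) := by
  rw [List.getD_eq_getElem _ _ (by simpa using hj)]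
  simp [sword]

lemma W_eq (A : List Bool) : Nat.card {B : List Bool // Dom A B} = W A := by
  rw [W, ← Nat.card_coe_set_eq]
  rfl

lemma exists_empty {a b : ℕ} (hab : a + b < N) (ha : (Pf N x).card = a)
    (hb : (Tf N x).card = b) : ∃ t, x t = Site.empty := by
  by_contra hcon
  push_neg at hcon
  have hsub : (Finset.univ : Finset (ZMod N)) ⊆ Pf N x ∪ Tf N x := by
    intro s _
    rw [Finset.mem_union, mem_Pf, mem_Tf]
    cases hc : x s with
    | particle => exact Or.inl rfl
    | anti => exact Or.inr rfl
    | empty => exact absurd hc (hcon s)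
  have hcard := Finset.card_le_card hsub
  have h2 := Finset.card_union_le (Pf N x) (Tf N x)
  rw [Finset.card_univ, ZMod.card] at hcard
  omega

end CollapseAux

/-- For a configuration `x` on ℤ/N with exactly `a` particles, exactly `b`
anti-particles and at least one empty site, the number of pairs (S, T) with
|S| = a, |T| = b collapsing to `x` is the product of the weights of the binary
sequences of the maximal cyclic arcs of non-empty sites of `x` (each such arc is
indexed by the empty site immediately to its left). -/
theorem card_collapse_fiber (N : ℕ) [NeZero N] (a b : ℕ) (hab : a + b < N)
    (x : ZMod N → Site)
    (ha : (Finset.univ.filter fun s => x s = Site.particle).card = a)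
    (hb : (Finset.univ.filter fun s => x s = Site.anti).card = b) :
    Set.ncard {p : Finset (ZMod N) × Finset (ZMod N) |
        p.1.card = a ∧ p.2.card = b ∧ collapse N p.1 p.2 = x}
      = ∏ e ∈ Finset.univ.filter (fun s => x s = Site.empty), W (arcWord N x e) := by
  classical
  have hx : ∃ t, x t = Site.empty :=
    CollapseAux.exists_empty N x hab ha hb
  set Fib : Set (Finset (ZMod N) × Finset (ZMod N)) :=
    {p : Finset (ZMod N) × Finset (ZMod N) |
      p.1.card = a ∧ p.2.card = b ∧ collapse N p.1 p.2 = x} with hFib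
  have haP : (CollapseAux.Pf N x).card = a := ha
  have hbT : (CollapseAux.Tf N x).card = b := hb
  have hEf : Finset.univ.filter (fun s => x s = Site.empty) = CollapseAux.Ef N x := rfl
  -- the comparison map
  let f : Fib → ∀ e : {e // e ∈ CollapseAux.Ef N x}, {B : List Bool // Dom (arcWord N x e.1) B} :=
    fun p e => ⟨CollapseAux.sword N p.1.1 (e.1 + 1) (arcLen N x e.1), by
      have hp : p.1.1.card = a ∧ p.1.2.card = b ∧ collapse N p.1.1 p.1.2 = x := p.2
      exact (CollapseAux.main_mp N x hx haP p.1.1 p.1.2 hp.1 hp.2.2).2.2 e.1 e.2⟩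
  have hinj : Function.Injective f := by
    intro p q hpq
    have hp : p.1.1.card = a ∧ p.1.2.card = b ∧ collapse N p.1.1 p.1.2 = x := p.2
    have hq : q.1.1.card = a ∧ q.1.2.card = b ∧ collapse N q.1.1 q.1.2 = x := q.2
    have hP := CollapseAux.main_mp N x hx haP p.1.1 p.1.2 hp.1 hp.2.2
    have hQ := CollapseAux.main_mp N x hx haP q.1.1 q.1.2 hq.1 hq.2.2
    apply Subtype.ext
    apply Prod.ext
    · ext s
      by_cases hs : x s = Site.empty
      · constructor
        · intro hmem
          exact absurd hs (hP.2.1 s hmem)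
        · intro hmem
          exact absurd hs (hQ.2.1 s hmem)
      · obtain ⟨hdlt, hceq⟩ := CollapseAux.decomp N x hx hs
        have heE : CollapseAux.eOf N x hx s ∈ CollapseAux.Ef N x := CollapseAux.eOf_mem N x hx s
        have hw := congrFun hpq ⟨CollapseAux.eOf N x hx s, heE⟩
        have hw2 : CollapseAux.sword N p.1.1 (CollapseAux.eOf N x hx s + 1) (arcLen N x (CollapseAux.eOf N x hx s))
            = CollapseAux.sword N q.1.1 (CollapseAux.eOf N x hx s + 1) (arcLen N x (CollapseAux.eOf N x hx s)) :=
          congrArg Subtype.val hw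
        have hg : decide ((CollapseAux.eOf N x hx s + 1 + ((CollapseAux.off N x hx s : ℕ) : ZMod N)) ∈ (p.1.1 : Finset (ZMod N)))
            = decide ((CollapseAux.eOf N x hx s + 1 + ((CollapseAux.off N x hx s : ℕ) : ZMod N)) ∈ (q.1.1 : Finset (ZMod N))) := by
          rw [← CollapseAux.sword_getD N _ _ hdlt, ← CollapseAux.sword_getD N _ _ hdlt, hw2]
        rw [← hceq] at hg
        simpa using hg
    · rw [hP.1, hQ.1]
  have hsurj : Function.Surjective f := by
    intro G
    set S : Finset (ZMod N) := Finset.univ.filter (fun s => x s ≠ Site.empty ∧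
      (G ⟨CollapseAux.eOf N x hx s, CollapseAux.eOf_mem N x hx s⟩).1.getD (CollapseAux.off N x hx s) false = true)
      with hSdef
    have hword : ∀ e (he : e ∈ CollapseAux.Ef N x),
        CollapseAux.sword N S (e + 1) (arcLen N x e) = (G ⟨e, he⟩).1 := by
      intro e he
      have hee := (CollapseAux.mem_Ef N).mp he
      have hlen : (G ⟨e, he⟩).1.length = arcLen N x e := by
        have h1 := CollapseAux.dom_length (G ⟨e, he⟩).2
        rw [← h1]
        simp [arcWord]
      apply List.ext_getElem (by simp [hlen])
      intro j h1 h2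
      have hj : j < arcLen N x e := by simpa using h1
      have hco := CollapseAux.coord N x hx hee hj
      have hne : x (e + 1 + (j : ZMod N)) ≠ Site.empty := (CollapseAux.arcLen_spec N x hee).2.2 j hj
      have hsub_eq : (⟨CollapseAux.eOf N x hx (e + 1 + (j : ZMod N)),
          CollapseAux.eOf_mem N x hx (e + 1 + (j : ZMod N))⟩ : {e' // e' ∈ CollapseAux.Ef N x})
          = ⟨e, he⟩ := Subtype.ext hco.2
      have hg1 : ((G ⟨CollapseAux.eOf N x hx (e + 1 + (j : ZMod N)),
            CollapseAux.eOf_mem N x hx (e + 1 + (j : ZMod N))⟩).1 : List Bool)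
          = (G ⟨e, he⟩).1 :=
        congrArg (fun e' : {e' // e' ∈ CollapseAux.Ef N x} => (G e').1) hsub_eq
      have hmem : ((e + 1 + (j : ZMod N)) ∈ S) ↔ ((G ⟨e, he⟩).1.getD j false = true) := by
        rw [hSdef]
        simp only [Finset.mem_filter, Finset.mem_univ, true_and]
        rw [hco.1, hg1]
        simp [hne]
      have hL : (CollapseAux.sword N S (e + 1) (arcLen N x e))[j]'h1 =
          decide ((e + 1 + (j : ZMod N)) ∈ S) := by
        simp [CollapseAux.sword]
      have hR : (G ⟨e, he⟩).1.getD j false = (G ⟨e, he⟩).1[j]'h2 :=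
        List.getD_eq_getElem _ _ h2
      rw [hL, ← hR]
      by_cases hmm : (e + 1 + (j : ZMod N)) ∈ S
      · rw [hmem.mp hmm]
        simp [hmm]
      · have h2' : (G ⟨e, he⟩).1.getD j false = false := by
          cases hgd2 : (G ⟨e, he⟩).1.getD j false
          · rfl
          · exact absurd (hmem.mpr hgd2) hmm
        rw [h2']
        simp [hmm]
    have hSsub : ∀ s ∈ S, x s ≠ Site.empty := by
      intro s hs
      rw [hSdef, Finset.mem_filter] at hs
      exact hs.2.1
    have hdoms : ∀ e ∈ CollapseAux.Ef N x,
        Dom (arcWord N x e) (CollapseAux.sword N S (e + 1) (arcLen N x e)) := by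
      intro e he
      rw [hword e he]
      exact (G ⟨e, he⟩).2
    obtain ⟨h1, h2, h3⟩ := CollapseAux.main_mpr N x hx haP hbT S hSsub hdoms
    refine ⟨⟨(S, CollapseAux.Tf N x), ⟨h1, h2, h3⟩⟩, ?_⟩
    funext e
    exact Subtype.ext (hword e.1 e.2)
  have hcard : Nat.card Fib
      = Nat.card (∀ e : {e // e ∈ CollapseAux.Ef N x}, {B : List Bool // Dom (arcWord N x e.1) B}) :=
    Nat.card_congr (Equiv.ofBijective f ⟨hinj, hsurj⟩)
  rw [← Nat.card_coe_set_eq]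
  rw [hEf]
  rw [hcard, Nat.card_pi]
  rw [← Finset.prod_coe_sort (CollapseAux.Ef N x) (fun e => W (arcWord N x e))]
  exact Finset.prod_congr rfl (fun e _ => CollapseAux.W_eq (arcWord N x e.1))
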